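/- Let N ≥ 1, L > 0, let f be L-smooth convex on ℝ^d and h closed, proper, convex on ℝ^d, and let θ, γ be the OptISTA coefficients. Define α_{i+1,i} = 1 + (2θ_i − 1)/θ_{i+1} and, for j ∈ [0:i−1], α_{i+1,j} = α_{j+1,j} + Σ_{k=j+1}^{i} ( 2θ_j/θ_{k+1} − α_{k,j}/θ_{k+1} ). Consider the fixed-step first-order sequences defined from x_0 = y_0 by y_{i+1} = x_0 − Σ_{j=0}^{i} (γ_j/L)∇f(x_j) − Σ_{j=0}^{i} (γ_j/L) h'(y_{j+1}) and x_{i+1} = x_0 − Σ_{j=0}^{i} (α_{i+1,j}/L)∇f(x_j) − Σ_{j=0}^{i} (α_{i+1,j}/L) h'(y_{j+1}) for i ∈ [0:N−1], where h'(y_{j+1}) is the subgradient of h at y_{j+1} implicitly defined by the proximal step y_{j+1} = prox_{(γ_j/L)h}( y_j − (γ_j/L)∇f(x_j) ). Then the sequences (x_i)_{i=1}^N and (y_i)_{i=1}^N so defined coincide with the x-iterates and y-iterates of OptISTA started at the same initial point. -/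

import Mathlib

/-!
With `u_j = (∇f(x_j) + h'(y_{j+1}))/L`, the span form reads `y_{i+1} = y_i - γ_i u_i` and
`x_i = x_0 - ∑_{j<i} α_{i,j} u_j`. The recursion for `α` is equivalent to the momentum recursion
`α_{k+1,j} = α_{k,j} + (θ_k - 1)/θ_{k+1} · (α_{k,j} - α_{k-1,j})` (reading `α_{k,k}` as `1`), which is
exactly the OptISTA update of `x` with `z_{k+1} = x_k - u_k`. Hence the span-form sequences form an
OptISTA run. Since `θ_i ≥ 1` makes every `γ_i` positive, each prox step has a unique output (the
prox objective is strongly convex), so two OptISTA runs from the same point coincide.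
-/

open Finset

noncomputable section

/-- `ℝ^d` as a Euclidean space. -/
abbrev E (d : ℕ) := EuclideanSpace ℝ (Fin d)

/-- `f : ℝ^d → ℝ` is `L`-smooth convex: convex, differentiable, with `L`-Lipschitz gradient. -/
def LSmoothConvex {d : ℕ} (L : ℝ) (f : E d → ℝ) : Prop :=
  ConvexOn ℝ Set.univ f ∧ Differentiable ℝ f ∧
    ∀ x y : E d, ‖gradient f x - gradient f y‖ ≤ L * ‖x - y‖

/-- `h : ℝ^d → ℝ ∪ {∞}` is closed (lower semicontinuous), proper, and convex. -/
def ClosedProperConvexER {d : ℕ} (h : E d → EReal) : Prop :=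
  LowerSemicontinuous h ∧ (∃ x, h x ≠ ⊤) ∧ (∀ x, h x ≠ ⊥) ∧
    ∀ x y : E d, ∀ a b : ℝ, 0 ≤ a → 0 ≤ b → a + b = 1 →
      h (a • x + b • y) ≤ (a : EReal) * h x + (b : EReal) * h y

/-- `p = prox_{γ h}(x)`, i.e. `p` minimizes `z ↦ h z + ‖z - x‖² / (2γ)`. -/
def IsProx {d : ℕ} (h : E d → EReal) (γ : ℝ) (x p : E d) : Prop :=
  ∀ w : E d, h p + ((‖p - x‖ ^ 2 / (2 * γ) : ℝ) : EReal)
    ≤ h w + ((‖w - x‖ ^ 2 / (2 * γ) : ℝ) : EReal)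

section Prox

variable {d : ℕ} {h : E d → EReal} {γ : ℝ} {x p q : E d}

lemma IsProx.ne_top (hp : IsProx h γ x p) (hproper : ∃ w, h w ≠ ⊤) : h p ≠ ⊤ := by
  obtain ⟨w, hw⟩ := hproper
  intro htop
  have hlt : h w + ((‖w - x‖ ^ 2 / (2 * γ) : ℝ) : EReal) < ⊤ :=
    EReal.add_lt_top hw (EReal.coe_ne_top _)
  have := (hp w).trans_lt hlt
  rw [htop, EReal.top_add_coe] at this
  exact lt_irrefl _ this

lemma norm_midpoint_sq (u v : E d) :
    ‖(1 / 2 : ℝ) • u + (1 / 2 : ℝ) • v‖ ^ 2 = ‖u‖ ^ 2 / 2 + ‖v‖ ^ 2 / 2 - ‖u - v‖ ^ 2 / 4 := by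
  have hpar := parallelogram_law_with_norm ℝ u v
  rw [← smul_add, norm_smul, Real.norm_of_nonneg (by norm_num)]
  nlinarith

theorem IsProx.eq (hproper : ∃ w, h w ≠ ⊤) (hbot : ∀ w, h w ≠ ⊥)
    (hconv : ∀ u v : E d, ∀ a b : ℝ, 0 ≤ a → 0 ≤ b → a + b = 1 →
      h (a • u + b • v) ≤ (a : EReal) * h u + (b : EReal) * h v)
    (hγ : 0 < γ) (hp : IsProx h γ x p) (hq : IsProx h γ x q) : p = q := by
  obtain ⟨a, ha⟩ : ∃ a : ℝ, h p = a :=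
    ⟨(h p).toReal, (EReal.coe_toReal (hp.ne_top hproper) (hbot p)).symm⟩
  obtain ⟨b, hb⟩ : ∃ b : ℝ, h q = b :=
    ⟨(h q).toReal, (EReal.coe_toReal (hq.ne_top hproper) (hbot q)).symm⟩
  set m := (1 / 2 : ℝ) • p + (1 / 2 : ℝ) • q
  have hpq : a + ‖p - x‖ ^ 2 / (2 * γ) ≤ b + ‖q - x‖ ^ 2 / (2 * γ) := by
    have := hp q
    rw [ha, hb] at this
    exact_mod_cast this
  have hqp : b + ‖q - x‖ ^ 2 / (2 * γ) ≤ a + ‖p - x‖ ^ 2 / (2 * γ) := by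
    have := hq p
    rw [ha, hb] at this
    exact_mod_cast this
  have hm : h m ≤ ((a / 2 + b / 2 : ℝ) : EReal) := by
    have := hconv p q (1 / 2) (1 / 2) (by norm_num) (by norm_num) (by norm_num)
    rw [ha, hb, ← EReal.coe_mul, ← EReal.coe_mul, ← EReal.coe_add] at this
    convert this using 2
    ring
  have hpm : a + ‖p - x‖ ^ 2 / (2 * γ) ≤ a / 2 + b / 2 + ‖m - x‖ ^ 2 / (2 * γ) := by
    have := (hp m).trans (add_le_add_left hm _)
    rw [ha] at this
    exact_mod_cast this
  have hmx : ‖m - x‖ ^ 2 = ‖p - x‖ ^ 2 / 2 + ‖q - x‖ ^ 2 / 2 - ‖p - q‖ ^ 2 / 4 := by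
    rw [← sub_sub_sub_cancel_right p q x, ← norm_midpoint_sq]
    congr 2
    module
  rw [hmx] at hpm
  have hdist : ‖p - q‖ ^ 2 / (2 * γ) ≤ 0 := by
    have : (‖p - x‖ ^ 2 / 2 + ‖q - x‖ ^ 2 / 2 - ‖p - q‖ ^ 2 / 4) / (2 * γ)
        = ‖p - x‖ ^ 2 / (2 * γ) / 2 + ‖q - x‖ ^ 2 / (2 * γ) / 2 - ‖p - q‖ ^ 2 / (2 * γ) / 4 := by
      ring
    linarith
  have : ‖p - q‖ ^ 2 ≤ 0 := by simpa using (div_le_iff₀ (by positivity)).mp hdist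
  exact sub_eq_zero.mp (norm_eq_zero.mp (by nlinarith [norm_nonneg (p - q)]))

end Prox

def IsOptISTARun {d : ℕ} (f : E d → ℝ) (h : E d → EReal) (L : ℝ) (θ γ : ℕ → ℝ) (N : ℕ)
    (x y z : ℕ → E d) : Prop :=
  ∀ i < N, IsProx h (γ i / L) (y i - (γ i / L) • gradient f (x i)) (y (i + 1)) ∧
    z (i + 1) = x i + (γ i)⁻¹ • (y (i + 1) - y i) ∧
    x (i + 1) = z (i + 1) + ((θ i - 1) / θ (i + 1)) • (z (i + 1) - z i)
      + (θ i / θ (i + 1)) • (z (i + 1) - x i)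

theorem IsOptISTARun.eq_of_eq_at_zero {d N : ℕ} {f : E d → ℝ} {h : E d → EReal} {L : ℝ}
    {θ γ : ℕ → ℝ} {x y z x' y' z' : ℕ → E d}
    (hproper : ∃ w, h w ≠ ⊤) (hbot : ∀ w, h w ≠ ⊥)
    (hconv : ∀ u v : E d, ∀ a b : ℝ, 0 ≤ a → 0 ≤ b → a + b = 1 →
      h (a • u + b • v) ≤ (a : EReal) * h u + (b : EReal) * h v)
    (hstep : ∀ i < N, 0 < γ i / L)
    (hrun : IsOptISTARun f h L θ γ N x y z) (hrun' : IsOptISTARun f h L θ γ N x' y' z')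
    (hx0 : x 0 = x' 0) (hy0 : y 0 = y' 0) (hz0 : z 0 = z' 0) :
    ∀ k ≤ N, x k = x' k ∧ y k = y' k ∧ z k = z' k := by
  intro k
  induction k with
  | zero => exact fun _ ↦ ⟨hx0, hy0, hz0⟩
  | succ i ih =>
    intro hi
    obtain ⟨hx, hy, hz⟩ := ih (by omega)
    obtain ⟨hprox, hzs, hxs⟩ := hrun i hi
    obtain ⟨hprox', hzs', hxs'⟩ := hrun' i hi
    have hy' : y (i + 1) = y' (i + 1) := by
      rw [← hx, ← hy] at hprox'
      exact hprox.eq hproper hbot hconv (hstep i hi) hprox'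
    have hz' : z (i + 1) = z' (i + 1) := by rw [hzs, hzs', hx, hy, hy']
    refine ⟨?_, hy', hz'⟩
    rw [hxs, hxs', hx, hz, hz']

lemma one_le_one_add_sqrt_div_two {a : ℝ} (ha : 0 ≤ a) : 1 ≤ (1 + √(1 + 4 * a)) / 2 := by
  have : 1 ≤ √(1 + 4 * a) := Real.one_le_sqrt.mpr (by linarith)
  linarith

lemma one_add_sqrt_div_two_sq {a : ℝ} (ha : 0 ≤ a) :
    ((1 + √(1 + 4 * a)) / 2) ^ 2 = (1 + √(1 + 4 * a)) / 2 + a := by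
  have := Real.sq_sqrt (by linarith : 0 ≤ 1 + 4 * a)
  linear_combination this / 4

lemma eq_momentum_of_eq_sub_sum {V : Type*} [AddCommGroup V] [Module ℝ V] {x u : ℕ → V}
    {c : ℕ → ℕ → ℝ} {β : ℝ} {n : ℕ}
    (hx : ∀ i, n ≤ i → i ≤ n + 2 → x i = x 0 - ∑ j ∈ range i, c i j • u j)
    (hc : ∀ j < n, c (n + 2) j = c (n + 1) j + β * (c (n + 1) j - c n j))
    (hcn : c (n + 2) n = c (n + 1) n + β * (c (n + 1) n - 1)) :
    x (n + 2) = x (n + 1) - c (n + 2) (n + 1) • u (n + 1) + β • (x (n + 1) - (x n - u n)) := by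
  have hsum : ∑ j ∈ range n, c (n + 2) j • u j
      = ∑ j ∈ range n, c (n + 1) j • u j
        + β • (∑ j ∈ range n, c (n + 1) j • u j - ∑ j ∈ range n, c n j • u j) := by
    rw [smul_sub, smul_sum, smul_sum, ← sum_sub_distrib, ← sum_add_distrib]
    refine sum_congr rfl fun j hj ↦ ?_
    rw [hc j (mem_range.mp hj)]
    module
  rw [hx (n + 2) (by omega) le_rfl, hx (n + 1) (by omega) (by omega), hx n le_rfl (by omega),
    sum_range_succ, sum_range_succ, sum_range_succ, hsum, hcn]
  module

namespace OptISTA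

variable {N : ℕ} {θ γ : ℕ → ℝ} {α : ℕ → ℕ → ℝ}

lemma theta_succ_eq (hθ : ∀ i, 1 ≤ i → i + 1 ≤ N → θ i = (1 + √(1 + 4 * θ (i - 1) ^ 2)) / 2)
    {i : ℕ} (hi : i + 1 < N) : θ (i + 1) = (1 + √(1 + 4 * θ i ^ 2)) / 2 :=
  hθ (i + 1) (by omega) hi

lemma theta_last_eq (hθN : θ N = (1 + √(1 + 8 * θ (N - 1) ^ 2)) / 2) :
    θ N = (1 + √(1 + 4 * (2 * θ (N - 1) ^ 2))) / 2 := by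
  rw [hθN, ← mul_assoc]
  norm_num

lemma one_le_theta (hθ0 : θ 0 = 1)
    (hθ : ∀ i, 1 ≤ i → i + 1 ≤ N → θ i = (1 + √(1 + 4 * θ (i - 1) ^ 2)) / 2)
    (hθN : θ N = (1 + √(1 + 8 * θ (N - 1) ^ 2)) / 2) : ∀ i ≤ N, 1 ≤ θ i
  | 0, _ => hθ0.ge
  | i + 1, hi => by
    rcases hi.lt_or_eq with hi | rfl
    · exact theta_succ_eq hθ hi ▸ one_le_one_add_sqrt_div_two (by positivity)
    · exact theta_last_eq hθN ▸ one_le_one_add_sqrt_div_two (by positivity)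

lemma theta_le_theta_pred
    (hθ : ∀ i, 1 ≤ i → i + 1 ≤ N → θ i = (1 + √(1 + 4 * θ (i - 1) ^ 2)) / 2)
    {i : ℕ} (hi : i < N) : θ i ≤ θ (N - 1) := by
  refine monotoneOn_of_le_succ Set.ordConnected_Iio (fun a _ _ ha ↦ ?_) hi
    (by simp; omega : N - 1 ∈ Set.Iio N) (by omega)
  rw [Order.succ_eq_add_one] at ha ⊢
  have hsucc := theta_succ_eq hθ ha
  have hsq := hsucc ▸ one_add_sqrt_div_two_sq (sq_nonneg (θ a))
  have hpos := hsucc ▸ one_le_one_add_sqrt_div_two (sq_nonneg (θ a))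
  nlinarith

lemma gamma_pos (hθ0 : θ 0 = 1)
    (hθ : ∀ i, 1 ≤ i → i + 1 ≤ N → θ i = (1 + √(1 + 4 * θ (i - 1) ^ 2)) / 2)
    (hθN : θ N = (1 + √(1 + 8 * θ (N - 1) ^ 2)) / 2)
    (hγ : ∀ i, i < N → γ i = 2 * θ i / θ N ^ 2 * (θ N ^ 2 - 2 * θ i ^ 2 + θ i))
    {i : ℕ} (hi : i < N) : 0 < γ i := by
  have hθi := one_le_theta hθ0 hθ hθN i hi.le
  have hθN1 := one_le_theta hθ0 hθ hθN N le_rfl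
  have hmono := theta_le_theta_pred hθ hi
  have hsqN := theta_last_eq hθN ▸ one_add_sqrt_div_two_sq (by positivity : 0 ≤ 2 * θ (N - 1) ^ 2)
  rw [hγ i hi]
  have : 0 < θ N ^ 2 - 2 * θ i ^ 2 + θ i := by nlinarith
  positivity

lemma alpha_succ
    (hαrec : ∀ i j, j < i → i < N →
      α (i + 1) j = α (j + 1) j
        + ∑ k ∈ Finset.Icc (j + 1) i, (2 * θ j / θ (k + 1) - α k j / θ (k + 1)))
    {i j : ℕ} (hji : j < i) (hi : i < N) :
    α (i + 1) j = α i j + (2 * θ j - α i j) / θ (i + 1) := by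
  obtain ⟨m, rfl⟩ : ∃ m, i = m + 1 := ⟨i - 1, by omega⟩
  rw [hαrec (m + 1) j hji hi, sum_Icc_succ_top (by omega)]
  rcases (Nat.le_of_lt_succ hji).eq_or_lt with rfl | hlt
  · simp only [Icc_eq_empty_of_lt (Nat.lt_succ_self _), sum_empty]
    ring
  · rw [hαrec m j hlt (by omega)]
    ring

lemma alpha_momentum
    (hαdiag : ∀ i, i < N → α (i + 1) i = 1 + (2 * θ i - 1) / θ (i + 1))
    (hαrec : ∀ i j, j < i → i < N →
      α (i + 1) j = α (j + 1) j
        + ∑ k ∈ Finset.Icc (j + 1) i, (2 * θ j / θ (k + 1) - α k j / θ (k + 1)))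
    {m : ℕ} (hm : m + 1 < N) (hθ : θ (m + 1) ≠ 0) :
    (∀ j < m, α (m + 2) j
      = α (m + 1) j + (θ (m + 1) - 1) / θ (m + 2) * (α (m + 1) j - α m j)) ∧
    α (m + 2) m = α (m + 1) m + (θ (m + 1) - 1) / θ (m + 2) * (α (m + 1) m - 1) := by
  -- both follow by eliminating `2 θ_j` between two consecutive steps of `alpha_succ`
  refine ⟨fun j hj ↦ ?_, ?_⟩
  · have hprev := alpha_succ hαrec hj (by omega : m < N)
    rw [alpha_succ hαrec (by omega) hm]
    have : 2 * θ j = α m j + θ (m + 1) * (α (m + 1) j - α m j) := by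
      rw [hprev]; field_simp; ring
    rw [this]
    ring
  · have hdiag := hαdiag m (by omega)
    rw [alpha_succ hαrec (by omega) hm]
    have : 2 * θ m = 1 + θ (m + 1) * (α (m + 1) m - 1) := by
      rw [hdiag]; field_simp; ring
    rw [this]
    ring

end OptISTA

theorem isOptISTARun_of_span {d N : ℕ} {f : E d → ℝ} {h : E d → EReal} {L : ℝ}
    {θ γ : ℕ → ℝ} {α : ℕ → ℕ → ℝ} {x y hs z : ℕ → E d}
    (hL : L ≠ 0) (hθ0 : θ 0 = 1) (hθ : ∀ i < N, θ i ≠ 0) (hγ : ∀ i < N, γ i ≠ 0)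
    (hαdiag : ∀ i, i < N → α (i + 1) i = 1 + (2 * θ i - 1) / θ (i + 1))
    (hαrec : ∀ i j, j < i → i < N →
      α (i + 1) j = α (j + 1) j
        + ∑ k ∈ Finset.Icc (j + 1) i, (2 * θ j / θ (k + 1) - α k j / θ (k + 1)))
    (hyprox : ∀ i, i < N →
      IsProx h (γ i / L) (y i - (γ i / L) • gradient f (x i)) (y (i + 1)))
    (hhs : ∀ i, i < N →
      hs (i + 1) = (L / γ i) • (y i - (γ i / L) • gradient f (x i) - y (i + 1)))
    (hxsum : ∀ i, i < N →
      x (i + 1) = x 0 - (∑ j ∈ Finset.range (i + 1), (α (i + 1) j / L) • gradient f (x j))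
        - ∑ j ∈ Finset.range (i + 1), (α (i + 1) j / L) • hs (j + 1))
    (hz0 : z 0 = x 0) (hz : ∀ i, z (i + 1) = x i - L⁻¹ • (gradient f (x i) + hs (i + 1))) :
    IsOptISTARun f h L θ γ N x y z := by
  set u : ℕ → E d := fun j ↦ L⁻¹ • (gradient f (x j) + hs (j + 1)) with hu
  have hxu : ∀ i ≤ N, x i = x 0 - ∑ j ∈ range i, α i j • u j
    | 0, _ => by simp
    | i + 1, hi => by
      rw [hxsum i hi, sub_sub, ← sum_add_distrib]
      congr 1
      refine sum_congr rfl fun j _ ↦ ?_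
      rw [hu, smul_smul, smul_add, div_eq_mul_inv]
  have hyu : ∀ i < N, y (i + 1) = y i - γ i • u i := by
    intro i hi
    have hcancel : γ i * L⁻¹ * (L / γ i) = 1 := by field_simp [hγ i hi]
    simp only [hu]
    rw [hhs i hi, smul_smul, smul_add, smul_smul, hcancel, one_smul]
    module
  have hzu : ∀ i, z (i + 1) = x i - u i := hz
  intro i hi
  refine ⟨hyprox i hi, ?_, ?_⟩
  · rw [hzu, hyu i hi, sub_sub_cancel_left, smul_neg, inv_smul_smul₀ (hγ i hi), ← sub_eq_add_neg]
  · rcases i with _ | m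
    · rw [hzu, hz0, hxu 1 hi, sum_range_one, hαdiag 0 hi, hθ0]
      module
    · obtain ⟨hc, hcn⟩ := OptISTA.alpha_momentum hαdiag hαrec hi (hθ (m + 1) (by omega))
      rw [show m + 1 + 1 = m + 2 from rfl,
        eq_momentum_of_eq_sub_sum (fun i _ hi' ↦ hxu i (by omega)) hc hcn, hzu, hzu,
        hαdiag (m + 1) hi]
      module

theorem optista_span_form_equivalence_general
    (d N : ℕ) (L : ℝ) (hL : 0 < L)
    (f : E d → ℝ)
    (h : E d → EReal) (hh : ClosedProperConvexER h)
    (θ : ℕ → ℝ) (hθ0 : θ 0 = 1)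
    (hθ : ∀ i, 1 ≤ i → i + 1 ≤ N → θ i = (1 + Real.sqrt (1 + 4 * θ (i - 1) ^ 2)) / 2)
    (hθN : θ N = (1 + Real.sqrt (1 + 8 * θ (N - 1) ^ 2)) / 2)
    (γ : ℕ → ℝ)
    (hγ : ∀ i, i < N → γ i = 2 * θ i / θ N ^ 2 * (θ N ^ 2 - 2 * θ i ^ 2 + θ i))
    (α : ℕ → ℕ → ℝ)
    (hαdiag : ∀ i, i < N → α (i + 1) i = 1 + (2 * θ i - 1) / θ (i + 1))
    (hαrec : ∀ i j, j < i → i < N →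
      α (i + 1) j = α (j + 1) j
        + ∑ k ∈ Finset.Icc (j + 1) i, (2 * θ j / θ (k + 1) - α k j / θ (k + 1)))
    -- the fixed-step span-form sequences, with subgradients `hs (j+1)` of `h` at `y (j+1)`
    (x y hs : ℕ → E d)
    (hy0 : y 0 = x 0)
    (hyprox : ∀ i, i < N →
      IsProx h (γ i / L) (y i - (γ i / L) • gradient f (x i)) (y (i + 1)))
    (hhs : ∀ i, i < N →
      hs (i + 1) = (L / γ i) • (y i - (γ i / L) • gradient f (x i) - y (i + 1)))
    (hxsum : ∀ i, i < N →
      x (i + 1) = x 0 - (∑ j ∈ Finset.range (i + 1), (α (i + 1) j / L) • gradient f (x j))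
        - ∑ j ∈ Finset.range (i + 1), (α (i + 1) j / L) • hs (j + 1))
    -- the OptISTA iterates started at the same point
    (xh yh zh : ℕ → E d)
    (hxh0 : xh 0 = x 0) (hyh0 : yh 0 = x 0) (hzh0 : zh 0 = x 0)
    (hyh : ∀ i, i < N →
      IsProx h (γ i / L) (yh i - (γ i / L) • gradient f (xh i)) (yh (i + 1)))
    (hzh : ∀ i, i < N → zh (i + 1) = xh i + (γ i)⁻¹ • (yh (i + 1) - yh i))
    (hxh : ∀ i, i < N →
      xh (i + 1) = zh (i + 1) + ((θ i - 1) / θ (i + 1)) • (zh (i + 1) - zh i)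
        + (θ i / θ (i + 1)) • (zh (i + 1) - xh i)) :
    ∀ k, k ≤ N → x k = xh k ∧ y k = yh k := by
  obtain ⟨-, hproper, hbot, hconv⟩ := hh
  have hγpos : ∀ i < N, 0 < γ i := fun i hi ↦ OptISTA.gamma_pos hθ0 hθ hθN hγ hi
  have hθne : ∀ i < N, θ i ≠ 0 := fun i hi ↦
    (zero_lt_one.trans_le (OptISTA.one_le_theta hθ0 hθ hθN i hi.le)).ne'
  let z : ℕ → E d := fun
    | 0 => x 0
    | i + 1 => x i - L⁻¹ • (gradient f (x i) + hs (i + 1))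
  have hrun : IsOptISTARun f h L θ γ N x y z :=
    isOptISTARun_of_span hL.ne' hθ0 hθne (fun i hi ↦ (hγpos i hi).ne') hαdiag hαrec hyprox hhs
      hxsum rfl fun _ ↦ rfl
  have hrun' : IsOptISTARun f h L θ γ N xh yh zh := fun i hi ↦ ⟨hyh i hi, hzh i hi, hxh i hi⟩
  intro k hk
  obtain ⟨hx, hy, -⟩ := hrun.eq_of_eq_at_zero hproper hbot hconv
    (fun i hi ↦ div_pos (hγpos i hi) hL) hrun' hxh0.symm (hy0.trans hyh0.symm) hzh0.symm k hk
  exact ⟨hx, hy⟩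

/-- Lemma 10, equivalence of the fixed-step span form and OptISTA.
With the OptISTA coefficients `θ, γ` and stepsizes `α` defined by
`α_{i+1,i} = 1 + (2θ_i - 1)/θ_{i+1}` and, for `j < i`,
`α_{i+1,j} = α_{j+1,j} + Σ_{k=j+1}^{i} (2θ_j/θ_{k+1} - α_{k,j}/θ_{k+1})`,
the fixed-step sequences
`y_{i+1} = x_0 - Σ_{j≤i} (γ_j/L) ∇f(x_j) - Σ_{j≤i} (γ_j/L) h'(y_{j+1})`,
`x_{i+1} = x_0 - Σ_{j≤i} (α_{i+1,j}/L) ∇f(x_j) - Σ_{j≤i} (α_{i+1,j}/L) h'(y_{j+1})`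
(with `h'(y_{j+1})` the subgradient implicitly defined by the prox step)
coincide with the `x`- and `y`-iterates of OptISTA started at the same point. -/
theorem optista_span_form_equivalence
    (d N : ℕ) (hN : 1 ≤ N) (L : ℝ) (hL : 0 < L)
    (f : E d → ℝ) (hf : LSmoothConvex L f)
    (h : E d → EReal) (hh : ClosedProperConvexER h)
    (θ : ℕ → ℝ) (hθ0 : θ 0 = 1)
    (hθ : ∀ i, 1 ≤ i → i + 1 ≤ N → θ i = (1 + Real.sqrt (1 + 4 * θ (i - 1) ^ 2)) / 2)
    (hθN : θ N = (1 + Real.sqrt (1 + 8 * θ (N - 1) ^ 2)) / 2)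
    (γ : ℕ → ℝ)
    (hγ : ∀ i, i < N → γ i = 2 * θ i / θ N ^ 2 * (θ N ^ 2 - 2 * θ i ^ 2 + θ i))
    (α : ℕ → ℕ → ℝ)
    (hαdiag : ∀ i, i < N → α (i + 1) i = 1 + (2 * θ i - 1) / θ (i + 1))
    (hαrec : ∀ i j, j < i → i < N →
      α (i + 1) j = α (j + 1) j
        + ∑ k ∈ Finset.Icc (j + 1) i, (2 * θ j / θ (k + 1) - α k j / θ (k + 1)))
    -- the fixed-step span-form sequences, with subgradients `hs (j+1)` of `h` at `y (j+1)`
    (x y hs : ℕ → E d)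
    (hy0 : y 0 = x 0)
    (hyprox : ∀ i, i < N →
      IsProx h (γ i / L) (y i - (γ i / L) • gradient f (x i)) (y (i + 1)))
    (hhs : ∀ i, i < N →
      hs (i + 1) = (L / γ i) • (y i - (γ i / L) • gradient f (x i) - y (i + 1)))
    (hysum : ∀ i, i < N →
      y (i + 1) = x 0 - (∑ j ∈ Finset.range (i + 1), (γ j / L) • gradient f (x j))
        - ∑ j ∈ Finset.range (i + 1), (γ j / L) • hs (j + 1))
    (hxsum : ∀ i, i < N →
      x (i + 1) = x 0 - (∑ j ∈ Finset.range (i + 1), (α (i + 1) j / L) • gradient f (x j))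
        - ∑ j ∈ Finset.range (i + 1), (α (i + 1) j / L) • hs (j + 1))
    -- the OptISTA iterates started at the same point
    (xh yh zh : ℕ → E d)
    (hxh0 : xh 0 = x 0) (hyh0 : yh 0 = x 0) (hzh0 : zh 0 = x 0)
    (hyh : ∀ i, i < N →
      IsProx h (γ i / L) (yh i - (γ i / L) • gradient f (xh i)) (yh (i + 1)))
    (hzh : ∀ i, i < N → zh (i + 1) = xh i + (γ i)⁻¹ • (yh (i + 1) - yh i))
    (hxh : ∀ i, i < N →
      xh (i + 1) = zh (i + 1) + ((θ i - 1) / θ (i + 1)) • (zh (i + 1) - zh i)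
        + (θ i / θ (i + 1)) • (zh (i + 1) - xh i)) :
    ∀ k, k ≤ N → x k = xh k ∧ y k = yh k :=
  optista_span_form_equivalence_general d N L hL f h hh θ hθ0 hθ hθN γ hγ α hαdiag hαrec x y hs hy0
    hyprox hhs hxsum xh yh zh hxh0 hyh0 hzh0 hyh hzh hxh

end
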